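/- Let K ≥ 2, α ∈ [0,1], γ ∈ (0,1], and let F be the tightness function on the ground set V = {s_1,…,s_K} ∪ {ω_1,…,ω_K}. Then F has submodularity ratio exactly γ: (i) Σ_{ω ∈ Ω\S} (F(S ∪ {ω}) − F(S)) ≥ γ·(F(S ∪ Ω) − F(S)) for all Ω, S ⊆ V; and (ii) taking S = ∅ and Ω = {ω_1,…,ω_K} one has Σ_{ω ∈ Ω} F({ω}) = 1 = γ·F(Ω) with F(Ω) = 1/γ > 0, so the bound γ is attained. -/

import Mathlib

open Finset

/-- `ξ_i := (1/K)·((K − γα)/K)^{i}` (0-indexed, so `xi K α γ i` is the paper's `ξ_{i+1}`). -/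
noncomputable def xi (K : ℕ) (α γ : ℝ) (i : Fin K) : ℝ :=
  (1 / (K : ℝ)) * (((K : ℝ) - γ * α) / (K : ℝ)) ^ (i : ℕ)

/-- `f(x) := ((γ⁻¹ − 1)/(K − 1))·x² + ((K − γ⁻¹)/(K − 1))·x`. -/
noncomputable def fconv (K : ℕ) (γ : ℝ) (x : ℝ) : ℝ :=
  ((γ⁻¹ - 1) / ((K : ℝ) - 1)) * x ^ 2 + (((K : ℝ) - γ⁻¹) / ((K : ℝ) - 1)) * x

/-- The tightness function on the ground set `V = {s_1,…,s_K} ∪ {ω_1,…,ω_K}`,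
modeled as `Fin K ⊕ Fin K` with `Sum.inl i = s_{i+1}` and `Sum.inr i = ω_{i+1}`:
`F(T) = (f(|T ∩ Ω|)/K)·(1 − αγ·Σ_{i : s_i ∈ T} ξ_i) + Σ_{i : s_i ∈ T} ξ_i`. -/
noncomputable def tightF (K : ℕ) (α γ : ℝ) (T : Finset (Fin K ⊕ Fin K)) : ℝ :=
  (fconv K γ (((Finset.univ.filter (fun i : Fin K => Sum.inr i ∈ T)).card : ℝ)) / (K : ℝ)) *
      (1 - α * γ * ∑ i ∈ Finset.univ.filter (fun i : Fin K => Sum.inl i ∈ T), xi K α γ i) +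
    ∑ i ∈ Finset.univ.filter (fun i : Fin K => Sum.inl i ∈ T), xi K α γ i

/-!
Write `F(T) = f(w)/K · (1 - αγ x) + x`, where `w` counts the `ω`'s in `T` and `x` is the
`ξ`-mass of the `s`'s in `T`. Adding `s_i` to `S` gains `ξ_i (1 - αγ f(w)/K)` and adding `ω_j`
gains `(f(w+1) - f(w))/K · (1 - αγ x)`. With `m` new `ω`'s and new `ξ`-mass `y`, the excess of
the sum of marginals over `γ (F(S ∪ Ω) - F(S))` is
`(1 - αγ x)/K · (m (f(w+1) - f(w)) - γ (f(w+m) - f(w))) + y ((1 - γ) - αγ (f(w) - γ f(w+m))/K)`.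
The first bracket is nonnegative because `f(n+1) - f(n) = 2an + 1` with `a = (γ⁻¹ - 1)/(K - 1) ≥ 0`
and `γ (a (K - 1) + 1) = 1`; the second because `f` increases on `ℕ` up to `f(K) = K/γ`.
-/

section fconv

variable {K : ℕ} {γ : ℝ}

lemma fconv_add_one_sub (hK : K ≠ 1) (x : ℝ) :
    fconv K γ (x + 1) - fconv K γ x = 2 * ((γ⁻¹ - 1) / ((K : ℝ) - 1)) * x + 1 := by
  have : (K : ℝ) - 1 ≠ 0 := sub_ne_zero.2 (Nat.cast_ne_one.2 hK)
  unfold fconv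
  field_simp
  ring

lemma fconv_one (hK : K ≠ 1) : fconv K γ 1 = 1 := by
  simpa [fconv] using fconv_add_one_sub (γ := γ) hK 0

lemma fconv_natCast_self (hK : K ≠ 1) : fconv K γ K = K / γ := by
  have : (K : ℝ) - 1 ≠ 0 := sub_ne_zero.2 (Nat.cast_ne_one.2 hK)
  unfold fconv
  field_simp
  ring

lemma fconv_coeff_nonneg (hK : 1 < K) (hγ0 : 0 < γ) (hγ1 : γ ≤ 1) :
    0 ≤ (γ⁻¹ - 1) / ((K : ℝ) - 1) :=
  div_nonneg (sub_nonneg.2 (one_le_inv₀ hγ0 |>.2 hγ1))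
    (sub_nonneg.2 (Nat.one_le_cast.2 hK.le))

lemma strictMono_fconv_natCast (hK : 1 < K) (hγ0 : 0 < γ) (hγ1 : γ ≤ 1) :
    StrictMono fun n : ℕ ↦ fconv K γ n := by
  refine strictMono_nat_of_lt_succ fun n ↦ sub_pos.1 ?_
  rw [Nat.cast_succ, fconv_add_one_sub hK.ne']
  have := fconv_coeff_nonneg hK hγ0 hγ1
  positivity

lemma gamma_mul_fconv_natCast_le (hK : 1 < K) (hγ0 : 0 < γ) (hγ1 : γ ≤ 1) {n : ℕ}
    (hn : n ≤ K) : γ * fconv K γ n ≤ K := by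
  have := (strictMono_fconv_natCast hK hγ0 hγ1).monotone hn
  rw [fconv_natCast_self hK.ne'] at this
  calc γ * fconv K γ n ≤ γ * (K / γ) := by gcongr
    _ = K := mul_div_cancel₀ _ hγ0.ne'

lemma gamma_mul_fconv_sub_le (hK : 1 < K) (hγ0 : 0 < γ) (hγ1 : γ ≤ 1) {w m : ℕ}
    (hwm : w + m ≤ K) :
    γ * (fconv K γ (w + m) - fconv K γ w) ≤ m * (fconv K γ (w + 1) - fconv K γ w) := by
  have hK' : (K : ℝ) - 1 ≠ 0 := sub_ne_zero.2 (Nat.cast_ne_one.2 hK.ne')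
  set a := (γ⁻¹ - 1) / ((K : ℝ) - 1) with ha
  have ha0 : 0 ≤ a := fconv_coeff_nonneg hK hγ0 hγ1
  have hKa : γ * (a * (K - 1) + 1) = 1 := by
    rw [ha, div_mul_cancel₀ _ hK']; field_simp; ring
  have hwm' : (w : ℝ) + m ≤ K := by exact_mod_cast hwm
  have hdiff : fconv K γ (w + m) - fconv K γ w = m * (a * (2 * w + m - 1) + 1) := by
    simp only [fconv, ha]; field_simp; ring
  rw [hdiff, fconv_add_one_sub hK.ne', ← ha, mul_left_comm]
  gcongr
  have haw : 0 ≤ a * w := mul_nonneg ha0 w.cast_nonneg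
  calc γ * (a * (2 * w + m - 1) + 1) ≤ γ * (a * w + (a * (K - 1) + 1)) := by
        refine mul_le_mul_of_nonneg_left ?_ hγ0.le
        nlinarith [mul_le_mul_of_nonneg_left hwm' ha0]
    _ = γ * (a * w) + 1 := by rw [mul_add, hKa]
    _ ≤ 2 * a * w + 1 := by nlinarith

lemma alpha_mul_gamma_mul_fconv_sub_le {α : ℝ} (hK : 1 < K) (hα0 : 0 ≤ α) (hα1 : α ≤ 1)
    (hγ0 : 0 < γ) (hγ1 : γ ≤ 1) {w n : ℕ} (hwn : w ≤ n) (hn : n ≤ K) :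
    α * γ * (fconv K γ w - γ * fconv K γ n) ≤ (1 - γ) * K := by
  have hmono := (strictMono_fconv_natCast hK hγ0 hγ1).monotone hwn
  have hbound := gamma_mul_fconv_natCast_le hK hγ0 hγ1 (hwn.trans hn)
  have hαγ : 0 ≤ α * γ * γ := by positivity
  calc α * γ * (fconv K γ w - γ * fconv K γ n)
      ≤ α * (1 - γ) * (γ * fconv K γ w) := by nlinarith
    _ ≤ α * (1 - γ) * K := by gcongr
    _ ≤ (1 - γ) * K := by
        rw [mul_assoc]
        exact mul_le_of_le_one_left (mul_nonneg (by linarith) K.cast_nonneg) hα1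

end fconv

/-- Here `P₀`, `P₁`, `Pₘ` stand for `f(w)`, `f(w + 1)`, `f(w + m)`. -/
lemma gamma_mul_increment_le {K α γ x y m P₀ P₁ Pₘ : ℝ} (hK : 0 < K) (hx : α * γ * x ≤ 1)
    (hy : 0 ≤ y) (hA : γ * (Pₘ - P₀) ≤ m * (P₁ - P₀))
    (hB : α * γ * (P₀ - γ * Pₘ) ≤ (1 - γ) * K) :
    γ * ((Pₘ / K * (1 - α * γ * (x + y)) + (x + y)) - (P₀ / K * (1 - α * γ * x) + x)) ≤
      y * (1 - α * γ * (P₀ / K)) + m * ((P₁ - P₀) / K * (1 - α * γ * x)) := by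
  have hexcess : y * (1 - α * γ * (P₀ / K)) + m * ((P₁ - P₀) / K * (1 - α * γ * x)) -
      γ * ((Pₘ / K * (1 - α * γ * (x + y)) + (x + y)) - (P₀ / K * (1 - α * γ * x) + x)) =
      ((1 - α * γ * x) * (m * (P₁ - P₀) - γ * (Pₘ - P₀)) +
        y * ((1 - γ) * K - α * γ * (P₀ - γ * Pₘ))) / K := by
    field_simp
    ring
  have : 0 ≤ ((1 - α * γ * x) * (m * (P₁ - P₀) - γ * (Pₘ - P₀)) +
      y * ((1 - γ) * K - α * γ * (P₀ - γ * Pₘ))) / K := by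
    apply div_nonneg _ hK.le
    apply add_nonneg <;> apply mul_nonneg <;> linarith
  linarith

section xi

variable {K : ℕ} {α γ : ℝ}

lemma xi_nonneg (h : γ * α ≤ K) (i : Fin K) : 0 ≤ xi K α γ i := by
  unfold xi
  have : 0 ≤ (K : ℝ) - γ * α := sub_nonneg.2 h
  positivity

lemma xi_le (h₀ : 0 ≤ γ * α) (h : γ * α ≤ K) (i : Fin K) : xi K α γ i ≤ 1 / K := by
  have hK : (0 : ℝ) < K := Nat.cast_pos.2 (Fin.pos i)
  unfold xi
  refine mul_le_of_le_one_right (by positivity) (pow_le_one₀ ?_ ?_)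
  · exact div_nonneg (sub_nonneg.2 h) hK.le
  · rw [div_le_one hK]; linarith

lemma sum_xi_le_one (h₀ : 0 ≤ γ * α) (h : γ * α ≤ K) (s : Finset (Fin K)) :
    ∑ i ∈ s, xi K α γ i ≤ 1 := by
  rcases K.eq_zero_or_pos with rfl | hK
  · simp [Subsingleton.elim s ∅]
  calc ∑ i ∈ s, xi K α γ i ≤ #s * (1 / K) := by
        simpa using sum_le_sum fun i _ ↦ xi_le h₀ h i
    _ ≤ K * (1 / K) := by
        gcongr; exact_mod_cast (card_le_univ s).trans_eq (Fintype.card_fin K)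
    _ = 1 := mul_one_div_cancel (by positivity)

end xi

section Sum

variable {ι κ : Type*} [DecidableEq ι] [DecidableEq κ]

lemma card_toRight_add_card_toRight_sdiff (S Ω : Finset (ι ⊕ κ)) :
    #S.toRight + #(Ω \ S).toRight = #(S ∪ Ω).toRight := by
  rw [← union_sdiff_self_eq_union, toRight_union, card_union_of_disjoint]
  rw [toRight_sdiff]
  exact disjoint_sdiff

lemma sum_toLeft_add_sum_toLeft_sdiff {M : Type*} [AddCommMonoid M] (S Ω : Finset (ι ⊕ κ))
    (g : ι → M) :
    ∑ i ∈ S.toLeft, g i + ∑ i ∈ (Ω \ S).toLeft, g i = ∑ i ∈ (S ∪ Ω).toLeft, g i := by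
  rw [← union_sdiff_self_eq_union, toLeft_union, sum_union]
  rw [toLeft_sdiff]
  exact disjoint_sdiff

end Sum

section tightF

variable {K : ℕ} {α γ : ℝ}

lemma tightF_eq (T : Finset (Fin K ⊕ Fin K)) :
    tightF K α γ T = fconv K γ #T.toRight / K * (1 - α * γ * ∑ i ∈ T.toLeft, xi K α γ i) +
      ∑ i ∈ T.toLeft, xi K α γ i := by
  have hl : univ.filter (fun i : Fin K ↦ Sum.inl i ∈ T) = T.toLeft := by ext; simp
  have hr : univ.filter (fun i : Fin K ↦ Sum.inr i ∈ T) = T.toRight := by ext; simp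
  rw [tightF, hl, hr]

lemma tightF_insert_inl_sub {S : Finset (Fin K ⊕ Fin K)} {i : Fin K} (h : Sum.inl i ∉ S) :
    tightF K α γ (insert (Sum.inl i) S) - tightF K α γ S =
      xi K α γ i * (1 - α * γ * (fconv K γ #S.toRight / K)) := by
  rw [tightF_eq, tightF_eq, toLeft_insert_inl, toRight_insert_inl,
    sum_insert (by simpa using h)]
  ring

lemma tightF_insert_inr_sub {S : Finset (Fin K ⊕ Fin K)} {j : Fin K} (h : Sum.inr j ∉ S) :
    tightF K α γ (insert (Sum.inr j) S) - tightF K α γ S =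
      (fconv K γ (#S.toRight + 1) - fconv K γ #S.toRight) / K *
        (1 - α * γ * ∑ i ∈ S.toLeft, xi K α γ i) := by
  rw [tightF_eq, tightF_eq, toLeft_insert_inr, toRight_insert_inr,
    card_insert_of_notMem (by simpa using h)]
  push_cast
  ring

lemma sum_tightF_insert_sub (S Ω : Finset (Fin K ⊕ Fin K)) :
    ∑ ω ∈ Ω \ S, (tightF K α γ (insert ω S) - tightF K α γ S) =
      (∑ i ∈ (Ω \ S).toLeft, xi K α γ i) * (1 - α * γ * (fconv K γ #S.toRight / K)) +
        #(Ω \ S).toRight * ((fconv K γ (#S.toRight + 1) - fconv K γ #S.toRight) / K *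
          (1 - α * γ * ∑ i ∈ S.toLeft, xi K α γ i)) := by
  rw [sum_sum_eq_sum_toLeft_add_sum_toRight,
    sum_congr rfl fun i hi ↦ tightF_insert_inl_sub (by simp_all),
    sum_congr rfl fun j hj ↦ tightF_insert_inr_sub (by simp_all),
    sum_mul, sum_const, nsmul_eq_mul]

lemma tightF_singleton_inr (i : Fin K) : tightF K α γ {Sum.inr i} = fconv K γ 1 / K := by
  have hl : ({Sum.inr i} : Finset (Fin K ⊕ Fin K)).toLeft = ∅ := by ext; simp
  have hr : ({Sum.inr i} : Finset (Fin K ⊕ Fin K)).toRight = {i} := by ext; simp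
  simp [tightF_eq, hl, hr]

lemma tightF_image_inr_univ :
    tightF K α γ (univ.image Sum.inr) = fconv K γ K / K := by
  have hl : (univ.image (Sum.inr : Fin K → Fin K ⊕ Fin K)).toLeft = ∅ := by ext; simp
  have hr : (univ.image (Sum.inr : Fin K → Fin K ⊕ Fin K)).toRight = univ := by ext; simp
  simp [tightF_eq, hl, hr]

end tightF

/-- **The tightness function has submodularity ratio exactly `γ`.**
(i) `Σ_{ω ∈ Ω\S} ρ_ω(S) ≥ γ·ρ_Ω(S)` for all `Ω, S`; (ii) for `S = ∅` and
`Ω = {ω_1,…,ω_K}`, `Σ_{ω ∈ Ω} F({ω}) = 1 = γ·F(Ω)` with `F(Ω) = 1/γ > 0`. -/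
theorem tightF_submodularity_ratio (K : ℕ) (hK : 2 ≤ K)
    (α γ : ℝ) (hα0 : 0 ≤ α) (hα1 : α ≤ 1) (hγ0 : 0 < γ) (hγ1 : γ ≤ 1) :
    (∀ Ω S : Finset (Fin K ⊕ Fin K),
      ∑ ω ∈ Ω \ S, (tightF K α γ (insert ω S) - tightF K α γ S) ≥
        γ * (tightF K α γ (S ∪ Ω) - tightF K α γ S)) ∧
    (∑ i : Fin K, tightF K α γ {Sum.inr i} = 1) ∧
    (γ * tightF K α γ (Finset.univ.image (Sum.inr : Fin K → Fin K ⊕ Fin K)) = 1) ∧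
    (tightF K α γ (Finset.univ.image (Sum.inr : Fin K → Fin K ⊕ Fin K)) = 1 / γ) ∧
    (0 < (1 : ℝ) / γ) := by
  have hK1 : 1 < K := hK
  have hKpos : (0 : ℝ) < K := by positivity
  have hγα : γ * α ≤ 1 := mul_le_one₀ hγ1 hα0 hα1
  have hγαK : γ * α ≤ K := hγα.trans (Nat.one_le_cast.2 hK1.le)
  have hall : tightF K α γ (univ.image Sum.inr) = 1 / γ := by
    rw [tightF_image_inr_univ, fconv_natCast_self hK1.ne']
    field_simp
  refine ⟨fun Ω S ↦ ?_, ?_, by rw [hall]; field_simp, hall, by positivity⟩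
  · have hwm := card_toRight_add_card_toRight_sdiff S Ω
    rw [sum_tightF_insert_sub, tightF_eq (S ∪ Ω), tightF_eq S, ← hwm,
      ← sum_toLeft_add_sum_toLeft_sdiff S Ω]
    push_cast
    refine gamma_mul_increment_le hKpos ?_ (sum_nonneg fun i _ ↦ xi_nonneg hγαK i)
      (gamma_mul_fconv_sub_le hK1 hγ0 hγ1 (hwm ▸ ?_))
      (mod_cast alpha_mul_gamma_mul_fconv_sub_le hK1 hα0 hα1 hγ0 hγ1 (Nat.le_add_right _ _)
        (hwm ▸ ?_))
    · calc α * γ * ∑ i ∈ S.toLeft, xi K α γ i ≤ α * γ * 1 := by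
            gcongr; exact sum_xi_le_one (by positivity) hγαK _
        _ ≤ 1 := by linarith
    all_goals exact (card_le_univ _).trans_eq (Fintype.card_fin K)
  · simp [tightF_singleton_inr, fconv_one hK1.ne', hKpos.ne']
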